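/- arXiv:2106.02628 — 2 statements merged into one kernel-verified Lean document; each statement's English description precedes it below -/
import Mathlib

section
/- Existence of a determinizing choice function for TI-GNI (from the 'only-if' direction of Theorem 3): Under the stated assumptions on U_2 (including totality), if P_1, P_2 satisfy TI-GNI with respect to (pre, post), then there exists a function f : σ_1 × σ_2 → R such that for all v_1, v_2, v_1', w': pre(v_1, v_2), v_1 ⇓_1 v_1', and (v_1', v_2) ⇓^f (v_1', w') imply post(v_1', w'). -/
/-- `Reach T F v v'`: there is a finite execution of the program `(T, F)`
from `v` ending in the final state `v'`. -/
def Reach {σ : Type*} (T : σ → σ → Prop) (F : σ → Prop) (v v' : σ) : Prop :=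
  ∃ (n : ℕ) (u : ℕ → σ), u 0 = v ∧ (∀ j < n, T (u j) (u (j + 1))) ∧ u n = v' ∧ F v'

/-- `Diverge T F v`: there is an infinite non-final execution of `(T, F)` from `v`. -/
def Diverge {σ : Type*} (T : σ → σ → Prop) (F : σ → Prop) (v : σ) : Prop :=
  ∃ u : ℕ → σ, u 0 = v ∧ (∀ j, T (u j) (u (j + 1))) ∧ (∀ j, ¬ F (u j))

/-- Transition relation of the `f`-determinized program `P₂^f` on `σ₁ × σ₂`. -/
def DetT {σ₁ σ₂ R : Type*} (U₂ : R → σ₂ → σ₂ → Prop) (f : σ₁ × σ₂ → R) :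
    σ₁ × σ₂ → σ₁ × σ₂ → Prop :=
  fun pw pw' => pw'.1 = pw.1 ∧ U₂ (f (pw.1, pw.2)) pw.2 pw'.2

/-- Final-state predicate of the `f`-determinized program `P₂^f`. -/
def DetF {σ₁ σ₂ : Type*} (F₂ : σ₂ → Prop) : σ₁ × σ₂ → Prop :=
  fun pw => F₂ pw.2

/-!
Call a state `w` of `P₂` *good* for `p` if from `w` the program `P₂` either reaches a final
state satisfying `post p` or diverges; TI-GNI says exactly that `v₂` is good for `v₁'` whenever
`pre v₁ v₂` and `v₁ ⇓₁ v₁'`. From a good non-final state some transition leads to a good state,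
and since `U₂ r w` is functional, the choice value `r` of that transition forces it. Letting
`f (p, w)` be such an `r` makes goodness an invariant of `P₂^f` (final states only loop), and a
good final state satisfies `post p` itself.
-/

section Program

variable {σ : Type*} {T : σ → σ → Prop} {F : σ → Prop} {v v' : σ}

theorem Reach.final (h : Reach T F v v') : F v' := by
  obtain ⟨_, _, _, _, _, hF⟩ := h
  exact hF

theorem Reach.invariant {I : σ → Prop} (hI : ∀ x y, I x → T x y → I y) (hv : I v)
    (h : Reach T F v v') : I v' := by
  obtain ⟨n, u, rfl, hstep, rfl, -⟩ := h
  have hu : ∀ j ≤ n, I (u j) := by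
    intro j hj
    induction j with
    | zero => exact hv
    | succ j ih => exact hI _ _ (ih (by omega)) (hstep j (by omega))
  exact hu n le_rfl

theorem Reach.eq_of_final (hfix : ∀ x y, F x → T x y → y = x) (hv : F v)
    (h : Reach T F v v') : v' = v :=
  h.invariant (I := (· = v)) (fun x y hx hxy => by subst hx; exact hfix x y hv hxy) rfl

theorem Reach.exists_step (hv : ¬ F v) (h : Reach T F v v') :
    ∃ v₁, T v v₁ ∧ Reach T F v₁ v' := by
  obtain ⟨n, u, rfl, hstep, rfl, hF⟩ := h
  cases n with
  | zero => exact absurd hF hv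
  | succ n =>
    exact ⟨u 1, hstep 0 (by omega),
      n, fun j => u (j + 1), rfl, fun j hj => hstep (j + 1) (by omega), rfl, hF⟩

theorem Diverge.not_final (h : Diverge T F v) : ¬ F v := by
  obtain ⟨u, rfl, -, hnF⟩ := h
  exact hnF 0

theorem Diverge.exists_step (h : Diverge T F v) : ∃ v₁, T v v₁ ∧ Diverge T F v₁ := by
  obtain ⟨u, rfl, hstep, hnF⟩ := h
  exact ⟨u 1, hstep 0, fun j => u (j + 1), rfl, fun j => hstep (j + 1), fun j => hnF (j + 1)⟩

def ReachesOrDiverges (T : σ → σ → Prop) (F : σ → Prop) (Q : σ → Prop) (v : σ) : Prop :=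
  (∃ v', Reach T F v v' ∧ Q v') ∨ Diverge T F v

variable {Q : σ → Prop}

theorem ReachesOrDiverges.exists_step (hv : ¬ F v) :
    ReachesOrDiverges T F Q v → ∃ v₁, T v v₁ ∧ ReachesOrDiverges T F Q v₁
  | .inl ⟨v', hreach, hQ⟩ =>
    let ⟨v₁, hT, hreach₁⟩ := hreach.exists_step hv
    ⟨v₁, hT, .inl ⟨v', hreach₁, hQ⟩⟩
  | .inr hdiv =>
    let ⟨v₁, hT, hdiv₁⟩ := hdiv.exists_step
    ⟨v₁, hT, .inr hdiv₁⟩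

theorem ReachesOrDiverges.of_final (hfix : ∀ x y, F x → T x y → y = x) (hv : F v) :
    ReachesOrDiverges T F Q v → Q v
  | .inl ⟨_, hreach, hQ⟩ => hreach.eq_of_final hfix hv ▸ hQ
  | .inr hdiv => absurd hv hdiv.not_final

end Program

section Determinization

variable {σ₁ σ₂ R : Type*} {T₂ : σ₂ → σ₂ → Prop} {F₂ : σ₂ → Prop} {U₂ : R → σ₂ → σ₂ → Prop}

theorem exists_choice_preserving [Nonempty R] {G : σ₂ → Prop}
    (hU₂T : ∀ w w', T₂ w w' ↔ ∃ r, U₂ r w w')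
    (hU₂fun : ∀ r w w' w'', U₂ r w w' → U₂ r w w'' → w' = w'')
    (hG : ∀ w, ¬ F₂ w → G w → ∃ w₁, T₂ w w₁ ∧ G w₁) (w : σ₂) :
    ∃ r, ¬ F₂ w → G w → ∀ w₁, U₂ r w w₁ → G w₁ := by
  by_cases hw : ¬ F₂ w ∧ G w
  · obtain ⟨w₁, hT, hG₁⟩ := hG w hw.1 hw.2
    obtain ⟨r, hr⟩ := (hU₂T w w₁).1 hT
    exact ⟨r, fun _ _ w₂ hr₂ => hU₂fun r w w₁ w₂ hr hr₂ ▸ hG₁⟩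
  · exact ⟨Classical.arbitrary R, fun h₁ h₂ => absurd ⟨h₁, h₂⟩ hw⟩

theorem DetT.preserves {f : σ₁ × σ₂ → R} {G : σ₁ → σ₂ → Prop}
    (hfix : ∀ w w', F₂ w → T₂ w w' → w' = w)
    (hU₂T : ∀ w w', T₂ w w' ↔ ∃ r, U₂ r w w')
    (hf : ∀ p w, ¬ F₂ w → G p w → ∀ w₁, U₂ (f (p, w)) w w₁ → G p w₁)
    (x y : σ₁ × σ₂) (hx : G x.1 x.2) (hxy : DetT U₂ f x y) : G y.1 y.2 := by
  obtain ⟨p, w⟩ := x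
  obtain ⟨p', w'⟩ := y
  obtain ⟨hp, hU⟩ := hxy
  rw [hp]
  by_cases hw : F₂ w
  · exact hfix w w' hw ((hU₂T w w').2 ⟨_, hU⟩) ▸ hx
  · exact hf p w hw hx w' hU

end Determinization

theorem tigni_choice_function_exists_general
    {σ₁ σ₂ : Type*} {R : Type*} [Nonempty R]
    (T₁ : σ₁ → σ₁ → Prop) (F₁ : σ₁ → Prop)
    (T₂ : σ₂ → σ₂ → Prop) (F₂ : σ₂ → Prop)
    (hFinFix₂ : ∀ v v', F₂ v → T₂ v v' → v' = v)
    (pre post : σ₁ → σ₂ → Prop)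
    (U₂ : R → σ₂ → σ₂ → Prop)
    (hU₂T : ∀ w w', T₂ w w' ↔ ∃ r, U₂ r w w')
    (hU₂fun : ∀ r w w' w'', U₂ r w w' → U₂ r w w'' → w' = w'')
    (hTIGNI : ∀ v₁ v₂ v₁', pre v₁ v₂ → Reach T₁ F₁ v₁ v₁' →
      (∃ v₂', Reach T₂ F₂ v₂ v₂' ∧ post v₁' v₂') ∨ Diverge T₂ F₂ v₂) :
    ∃ f : σ₁ × σ₂ → R,
      ∀ v₁ v₂ v₁' w', pre v₁ v₂ → Reach T₁ F₁ v₁ v₁' →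
        Reach (DetT U₂ f) (DetF F₂) (v₁', v₂) (v₁', w') → post v₁' w' := by
  let G p := ReachesOrDiverges T₂ F₂ (post p)
  have hchoice (pw : σ₁ × σ₂) :
      ∃ r, ¬ F₂ pw.2 → G pw.1 pw.2 → ∀ w₁, U₂ r pw.2 w₁ → G pw.1 w₁ :=
    exists_choice_preserving hU₂T hU₂fun (fun _ => ReachesOrDiverges.exists_step) pw.2
  choose f hf using hchoice
  refine ⟨f, fun v₁ v₂ v₁' w' hpre hreach₁ hreach => ?_⟩
  have hstart : G v₁' v₂ := hTIGNI v₁ v₂ v₁' hpre hreach₁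
  have hgood : G v₁' w' :=
    hreach.invariant (I := fun pw => G pw.1 pw.2)
      (DetT.preserves hFinFix₂ hU₂T fun p w => hf (p, w)) hstart
  exact ReachesOrDiverges.of_final hFinFix₂ hreach.final hgood

/-- Existence of a determinizing choice function for TI-GNI
(from the 'only-if' direction of Theorem 3). -/
theorem tigni_choice_function_exists
    {σ₁ σ₂ : Type*} {R : Type*} [Nonempty R]
    (T₁ : σ₁ → σ₁ → Prop) (F₁ : σ₁ → Prop)
    (T₂ : σ₂ → σ₂ → Prop) (F₂ : σ₂ → Prop)
    (hFinFix₁ : ∀ v v', F₁ v → T₁ v v' → v' = v) (hFinLoop₁ : ∀ v, F₁ v → T₁ v v)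
    (hFinFix₂ : ∀ v v', F₂ v → T₂ v v' → v' = v) (hFinLoop₂ : ∀ v, F₂ v → T₂ v v)
    (pre post : σ₁ → σ₂ → Prop)
    (U₂ : R → σ₂ → σ₂ → Prop)
    (hU₂T : ∀ w w', T₂ w w' ↔ ∃ r, U₂ r w w')
    (hU₂fun : ∀ r w w' w'', U₂ r w w' → U₂ r w w'' → w' = w'')
    (hU₂tot : ∀ r w, ∃ w', U₂ r w w')
    (hTIGNI : ∀ v₁ v₂ v₁', pre v₁ v₂ → Reach T₁ F₁ v₁ v₁' →
      (∃ v₂', Reach T₂ F₂ v₂ v₂' ∧ post v₁' v₂') ∨ Diverge T₂ F₂ v₂) :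
    ∃ f : σ₁ × σ₂ → R,
      ∀ v₁ v₂ v₁' w', pre v₁ v₂ → Reach T₁ F₁ v₁ v₁' →
        Reach (DetT U₂ f) (DetF F₂) (v₁', v₂) (v₁', w') → post v₁' w' :=
  tigni_choice_function_exists_general T₁ F₁ T₂ F₂ hFinFix₂ pre post U₂ hU₂T hU₂fun hTIGNI
end

section
/- Existence of a terminating determinizing choice function for TS-GNI (from the 'only-if' direction of Theorem 4): Under the stated assumptions on U_2 (including totality), if P_1, P_2 satisfy TS-GNI with respect to (pre, post), then there exists a function f : σ_1 × σ_2 → R such that for all v_1, v_2, v_1' with pre(v_1, v_2) and v_1 ⇓_1 v_1', there exists w' with (v_1', v_2) ⇓^f (v_1', w') and post(v_1', w'). -/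
/-!
For fixed `v₁'`, call a state `w` of `P₂` good if some execution from `w` ends in a final
state `w'` with `post v₁' w'`, and let its distance be the length of a shortest such
execution. At a good state of positive distance, some transition `T₂ w w₀` leads to a good
state of smaller distance, and by `T₂ = ∃ r, U₂ r` it is taken by some choice value `r`;
`f (v₁', w)` picks such an `r`. Following `f` then strictly decreases the distance, so the
determinized program reaches a final state satisfying `post v₁'` from every good state,
in particular from every `v₂` with `pre v₁ v₂`, by TS-GNI.
-/

def ReachIn {σ : Type*} (T : σ → σ → Prop) (F : σ → Prop) (n : ℕ) (v v' : σ) : Prop :=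
  ∃ u : ℕ → σ, u 0 = v ∧ (∀ j < n, T (u j) (u (j + 1))) ∧ u n = v' ∧ F v'

section Reach

variable {σ τ : Type*} {T : σ → σ → Prop} {F : σ → Prop} {v v₀ v' : σ}

theorem reachIn_zero (h : ReachIn T F 0 v v') : v' = v ∧ F v := by
  obtain ⟨u, rfl, -, rfl, hF⟩ := h
  exact ⟨rfl, hF⟩

theorem reachIn_succ {n : ℕ} (h : ReachIn T F (n + 1) v v') :
    ∃ v₀, T v v₀ ∧ ReachIn T F n v₀ v' := by
  obtain ⟨u, rfl, hstep, rfl, hF⟩ := h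
  exact ⟨u 1, hstep 0 n.succ_pos, fun j => u (j + 1), rfl,
    fun j hj => hstep (j + 1) (by omega), rfl, hF⟩

theorem Reach.refl (hF : F v) : Reach T F v v :=
  ⟨0, fun _ => v, rfl, fun j hj => absurd hj j.not_lt_zero, rfl, hF⟩

theorem Reach.head (hT : T v v₀) (h : Reach T F v₀ v') : Reach T F v v' := by
  obtain ⟨n, u, rfl, hstep, rfl, hF⟩ := h
  refine ⟨n + 1, fun j => Nat.casesOn j v u, rfl, ?_, rfl, hF⟩
  rintro (_ | j) hj
  exacts [hT, hstep j (by omega)]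

theorem Reach.map {T' : τ → τ → Prop} {F' : τ → Prop} (φ : σ → τ)
    (hT : ∀ a b, T a b → T' (φ a) (φ b)) (hF : ∀ a, F a → F' (φ a)) (h : Reach T F v v') :
    Reach T' F' (φ v) (φ v') := by
  obtain ⟨n, u, rfl, hstep, rfl, hFu⟩ := h
  exact ⟨n, φ ∘ u, rfl, fun j hj => hT _ _ (hstep j hj), rfl, hF _ hFu⟩

end Reach

theorem exists_choice_preserving_reach {α R : Type*} [Nonempty R] (U : R → α → α → Prop)
    (F G : α → Prop) :
    ∃ g : α → R, ∀ w w', Reach (fun a b => ∃ r, U r a b) F w w' → G w' →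
      ∃ w'', Reach (fun a b => U (g a) a b) F w w'' ∧ G w'' := by
  classical
  set T : α → α → Prop := fun a b => ∃ r, U r a b
  let P (w : α) (n : ℕ) : Prop := ∃ w', ReachIn T F n w w' ∧ G w'
  have choice : ∀ w, ∃ r, ∀ (h : ∃ n, P w n) k, Nat.find h = k + 1 →
      ∃ w₀, U r w w₀ ∧ P w₀ k := by
    intro w
    by_cases h : ∃ n, P w n
    · cases hk : Nat.find h with
      | zero => exact ⟨Classical.arbitrary R, fun _ k hk' => by omega⟩
      | succ k =>
        obtain ⟨w', hw', hG⟩ := hk ▸ Nat.find_spec h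
        obtain ⟨w₀, ⟨r, hr⟩, hw₀⟩ := reachIn_succ hw'
        refine ⟨r, fun _ k' hk' => ?_⟩
        obtain rfl : k' = k := Nat.succ_injective (hk'.symm.trans hk)
        exact ⟨w₀, hr, w', hw₀, hG⟩
    · exact ⟨Classical.arbitrary R, fun h' => absurd h' h⟩
  choose g hg using choice
  suffices key : ∀ n w w', ReachIn T F n w w' → G w' →
      ∃ w'', Reach (fun a b => U (g a) a b) F w w'' ∧ G w'' from
    ⟨g, fun w w' ⟨n, hn⟩ => key n w w' hn⟩
  intro n
  induction n using Nat.strong_induction_on with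
  | _ n ih =>
    intro w w' hn hG
    have h : ∃ n, P w n := ⟨n, w', hn, hG⟩
    have hle : Nat.find h ≤ n := Nat.find_min' h ⟨w', hn, hG⟩
    cases hk : Nat.find h with
    | zero =>
      obtain ⟨w'', hw'', hG''⟩ := hk ▸ Nat.find_spec h
      obtain ⟨rfl, hF⟩ := reachIn_zero hw''
      exact ⟨_, Reach.refl hF, hG''⟩
    | succ k =>
      obtain ⟨w₀, hU, w₁, hw₁, hG₁⟩ := hg w h k hk
      obtain ⟨w'', hreach, hG''⟩ := ih k (by omega) w₀ w₁ hw₁ hG₁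
      exact ⟨w'', hreach.head hU, hG''⟩

theorem tsgni_choice_function_exists_general
    {σ₁ σ₂ : Type*} {R : Type*} [Nonempty R]
    (T₁ : σ₁ → σ₁ → Prop) (F₁ : σ₁ → Prop)
    (T₂ : σ₂ → σ₂ → Prop) (F₂ : σ₂ → Prop)
    (pre post : σ₁ → σ₂ → Prop)
    (U₂ : R → σ₂ → σ₂ → Prop)
    (hU₂T : ∀ w w', T₂ w w' ↔ ∃ r, U₂ r w w')
    (hTSGNI : ∀ v₁ v₂ v₁', pre v₁ v₂ → Reach T₁ F₁ v₁ v₁' →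
      ∃ v₂', Reach T₂ F₂ v₂ v₂' ∧ post v₁' v₂') :
    ∃ f : σ₁ × σ₂ → R,
      ∀ v₁ v₂ v₁', pre v₁ v₂ → Reach T₁ F₁ v₁ v₁' →
        ∃ w', Reach (DetT U₂ f) (DetF F₂) (v₁', v₂) (v₁', w') ∧ post v₁' w' := by
  choose g hg using fun p => exists_choice_preserving_reach U₂ F₂ (post p)
  refine ⟨fun pw => g pw.1 pw.2, fun v₁ v₂ v₁' hpre hreach => ?_⟩
  obtain ⟨v₂', hv₂', hpost⟩ := hTSGNI v₁ v₂ v₁' hpre hreach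
  obtain ⟨w', hw', hpost'⟩ :=
    hg v₁' v₂ v₂' (hv₂'.map id (fun a b hab => (hU₂T a b).mp hab) fun _ h => h) hpost
  exact ⟨w', hw'.map (v₁', ·) (fun _ _ hab => ⟨rfl, hab⟩) (fun _ h => h), hpost'⟩

/-- Existence of a terminating determinizing choice function for TS-GNI
(from the 'only-if' direction of Theorem 4). -/
theorem tsgni_choice_function_exists
    {σ₁ σ₂ : Type*} {R : Type*} [Nonempty R]
    (T₁ : σ₁ → σ₁ → Prop) (F₁ : σ₁ → Prop)
    (T₂ : σ₂ → σ₂ → Prop) (F₂ : σ₂ → Prop)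
    (hFinFix₁ : ∀ v v', F₁ v → T₁ v v' → v' = v) (hFinLoop₁ : ∀ v, F₁ v → T₁ v v)
    (hFinFix₂ : ∀ v v', F₂ v → T₂ v v' → v' = v) (hFinLoop₂ : ∀ v, F₂ v → T₂ v v)
    (pre post : σ₁ → σ₂ → Prop)
    (U₂ : R → σ₂ → σ₂ → Prop)
    (hU₂T : ∀ w w', T₂ w w' ↔ ∃ r, U₂ r w w')
    (hU₂fun : ∀ r w w' w'', U₂ r w w' → U₂ r w w'' → w' = w'')
    (hU₂tot : ∀ r w, ∃ w', U₂ r w w')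
    (hTSGNI : ∀ v₁ v₂ v₁', pre v₁ v₂ → Reach T₁ F₁ v₁ v₁' →
      ∃ v₂', Reach T₂ F₂ v₂ v₂' ∧ post v₁' v₂') :
    ∃ f : σ₁ × σ₂ → R,
      ∀ v₁ v₂ v₁', pre v₁ v₂ → Reach T₁ F₁ v₁ v₁' →
        ∃ w', Reach (DetT U₂ f) (DetF F₂) (v₁', v₂) (v₁', w') ∧ post v₁' w' :=
  tsgni_choice_function_exists_general T₁ F₁ T₂ F₂ pre post U₂ hU₂T hTSGNI
end
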